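/- In the affine symmetric group of type Ã_{n−1} with Coxeter element c determined by inner and outer points, for every outer point i and inner point j, the element τ_{ij} = (i j)_n · (i j+n)_n is a translation lying in the interval [1,c]_T; as a permutation it equals the product of loops ℓ_i ∘ ℓ_j^{−1}, i.e., it sends i+kn ↦ i+(k+1)n and j+kn ↦ j+(k−1)n for all k and fixes all other integers. -/

import Mathlib

lemma emod_add_n (x n : ℤ) : (x + n) % n = x % n := by
  rw [show x + n = x + n * 1 by ring, Int.add_mul_emod_self_left]

lemma emod_sub_n (x n : ℤ) : (x - n) % n = x % n := by
  rw [show x - n = x + n * (-1) by ring, Int.add_mul_emod_self_left]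

/-- The loop `ℓ_a`: the periodic permutation sending `i` to `i + n` when `i ≡ a (mod n)`
and fixing all other integers. -/
def loopP (n a : ℤ) : Equiv.Perm ℤ where
  toFun x := if x % n = a % n then x + n else x
  invFun x := if x % n = a % n then x - n else x
  left_inv x := by
    by_cases h : x % n = a % n
    · simp only [if_pos h, emod_add_n, if_pos h]; ring
    · simp only [if_neg h, if_neg h]
  right_inv x := by
    by_cases h : x % n = a % n
    · simp only [if_pos h, emod_sub_n, if_pos h]; ring
    · simp only [if_neg h, if_neg h]

lemma reflN_invol (n i j : ℤ) (h : ¬ i % n = j % n) :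
    Function.Involutive (fun x : ℤ =>
      x + (if x % n = i % n then j - i else if x % n = j % n then i - j else 0)) := by
  intro x
  by_cases h1 : x % n = i % n
  · simp only [if_pos h1]
    have e1 : (x + (j - i)) % n = j % n := by
      rw [Int.add_emod, h1, ← Int.add_emod, show i + (j - i) = j by ring]
    have e2 : ¬ (x + (j - i)) % n = i % n := by rw [e1]; exact fun hc => h hc.symm
    simp only [if_neg e2, if_pos e1]; ring
  · by_cases h2 : x % n = j % n
    · simp only [if_neg h1, if_pos h2]
      have e1 : (x + (i - j)) % n = i % n := by
        rw [Int.add_emod, h2, ← Int.add_emod, show j + (i - j) = i by ring]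
      simp only [if_pos e1]; ring
    · simp only [if_neg h1, if_neg h2, add_zero, if_neg h1, if_neg h2]

/-- The reflection `(i j)_n`: the periodic permutation swapping `i + kn` and `j + kn` for
all `k ∈ ℤ` and fixing all other integers (the identity if `i ≡ j (mod n)`). -/
noncomputable def reflN (n i j : ℤ) : Equiv.Perm ℤ :=
  if h : i % n = j % n then 1 else (reflN_invol n i j h).toPerm

/-- The set of reflections of the affine symmetric group: the permutations `(a b)_n` with
`a ≢ b (mod n)`. -/
noncomputable def TSet (n : ℤ) : Set (Equiv.Perm ℤ) :=
  {t | ∃ a b : ℤ, ¬ a % n = b % n ∧ t = reflN n a b}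

/-- The absolute (reflection) length with respect to a set `T` of generators. -/
noncomputable def absLength (T : Set (Equiv.Perm ℤ)) (w : Equiv.Perm ℤ) : ℕ :=
  sInf {m | ∃ l : List (Equiv.Perm ℤ), l.length = m ∧ (∀ t ∈ l, t ∈ T) ∧ l.prod = w}

/-- The absolute order with respect to `T`. -/
def absLe (T : Set (Equiv.Perm ℤ)) (u w : Equiv.Perm ℤ) : Prop :=
  absLength T u + absLength T (u⁻¹ * w) = absLength T w
section Helpers

variable {n : ℤ}

lemma reflN_apply (n a b : ℤ) (h : ¬ a % n = b % n) (x : ℤ) :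
    reflN n a b x = x + (if x % n = a % n then b - a else if x % n = b % n then a - b else 0) := by
  rw [reflN, dif_neg h]
  rfl

lemma reflN_sq (n a b : ℤ) : reflN n a b * reflN n a b = 1 := by
  by_cases h : a % n = b % n
  · rw [reflN, dif_pos h]; simp
  · apply Equiv.ext
    intro x
    simp only [Equiv.Perm.mul_apply, Equiv.Perm.one_apply]
    rw [reflN, dif_neg h]
    exact (reflN_invol n a b h) x

lemma reflN_inv (n a b : ℤ) : (reflN n a b)⁻¹ = reflN n a b :=
  inv_eq_of_mul_eq_one_left (reflN_sq n a b)

lemma reflN_mem_TSet (n a b : ℤ) (h : ¬ a % n = b % n) : reflN n a b ∈ TSet n :=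
  ⟨a, b, h, rfl⟩

lemma emod_shift (n x u v : ℤ) (h : x % n = u % n) : (x + (v - u)) % n = v % n := by
  rw [Int.add_emod, h, ← Int.add_emod, show u + (v - u) = v by ring]

lemma emod_eq_add_mul (n x p : ℤ) (hn : n ≠ 0) (h : x % n = p % n) : ∃ k : ℤ, x = p + k * n := by
  have hd : n ∣ x - p := Int.dvd_of_emod_eq_zero (by
    have := Int.emod_eq_emod_iff_emod_sub_eq_zero.mp h
    exact this)
  obtain ⟨k, hk⟩ := hd
  exact ⟨k, by linarith [hk]⟩

lemma icc_emod_inj (hn : 0 < n) {a b : ℤ} (ha : a ∈ Finset.Icc 1 n) (hb : b ∈ Finset.Icc 1 n)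
    (h : a % n = b % n) : a = b := by
  simp only [Finset.mem_Icc] at ha hb
  have key : ∀ c : ℤ, 1 ≤ c → c ≤ n → c % n = if c = n then 0 else c := by
    intro c h1 h2
    by_cases hc : c = n
    · simp [hc, Int.emod_self]
    · rw [if_neg hc, Int.emod_eq_of_lt (by omega) (by omega)]
  rw [key a ha.1 ha.2, key b hb.1 hb.2] at h
  split_ifs at h with h1 h2 h2 <;> omega

lemma exists_rep (hn : 0 < n) (x : ℤ) : ∃ y ∈ Finset.Icc (1 : ℤ) n, x % n = y % n := by
  have h0 : 0 ≤ x % n := Int.emod_nonneg x (by omega)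
  have h1 : x % n < n := Int.emod_lt_of_pos x hn
  by_cases h : x % n = 0
  · exact ⟨n, by simp [Finset.mem_Icc]; omega, by rw [h, Int.emod_self]⟩
  · exact ⟨x % n, by simp [Finset.mem_Icc]; omega,
      by rw [Int.emod_emod_of_dvd x dvd_rfl]⟩

end Helpers
/-- successor in a finite set, cyclically. -/
noncomputable def nxt (S : Finset ℤ) (p : ℤ) : ℤ :=
  if h : (S.filter (p < ·)).Nonempty then (S.filter (p < ·)).min' h
  else if h2 : S.Nonempty then S.min' h2 else p

/-- predecessor in a finite set, cyclically. -/
noncomputable def prv (S : Finset ℤ) (p : ℤ) : ℤ :=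
  if h : (S.filter (· < p)).Nonempty then (S.filter (· < p)).max' h
  else if h2 : S.Nonempty then S.max' h2 else p

lemma nxt_eq_of (S : Finset ℤ) (p m : ℤ) (hm : m ∈ S) (hpm : p < m)
    (hmin : ∀ z ∈ S, p < z → m ≤ z) : nxt S p = m := by
  have hmem : m ∈ S.filter (p < ·) := Finset.mem_filter.2 ⟨hm, hpm⟩
  have hne : (S.filter (p < ·)).Nonempty := ⟨m, hmem⟩
  rw [nxt, dif_pos hne]
  apply le_antisymm (Finset.min'_le _ _ hmem)
  apply Finset.le_min'
  intro z hz
  rcases Finset.mem_filter.1 hz with ⟨h1, h2⟩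
  exact hmin z h1 h2

lemma nxt_eq_min_of (S : Finset ℤ) (p m : ℤ) (hS : S.Nonempty)
    (hmax : ∀ z ∈ S, ¬ p < z) (hm : m ∈ S) (hmin : ∀ z ∈ S, m ≤ z) : nxt S p = m := by
  have hemp : ¬ (S.filter (p < ·)).Nonempty := by
    rintro ⟨z, hz⟩
    rcases Finset.mem_filter.1 hz with ⟨h1, h2⟩
    exact hmax z h1 h2
  rw [nxt, dif_neg hemp, dif_pos hS]
  apply le_antisymm (Finset.min'_le _ _ hm)
  apply Finset.le_min'
  exact hmin

lemma prv_eq_of (S : Finset ℤ) (p m : ℤ) (hm : m ∈ S) (hpm : m < p)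
    (hmax : ∀ z ∈ S, z < p → z ≤ m) : prv S p = m := by
  have hmem : m ∈ S.filter (· < p) := Finset.mem_filter.2 ⟨hm, hpm⟩
  have hne : (S.filter (· < p)).Nonempty := ⟨m, hmem⟩
  rw [prv, dif_pos hne]
  apply le_antisymm
  · apply Finset.max'_le
    intro z hz
    rcases Finset.mem_filter.1 hz with ⟨h1, h2⟩
    exact hmax z h1 h2
  · exact Finset.le_max' _ _ hmem

lemma prv_eq_max_of (S : Finset ℤ) (p m : ℤ) (hS : S.Nonempty)
    (hmin : ∀ z ∈ S, ¬ z < p) (hm : m ∈ S) (hmax : ∀ z ∈ S, z ≤ m) : prv S p = m := by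
  have hemp : ¬ (S.filter (· < p)).Nonempty := by
    rintro ⟨z, hz⟩
    rcases Finset.mem_filter.1 hz with ⟨h1, h2⟩
    exact hmin z h1 h2
  rw [prv, dif_neg hemp, dif_pos hS]
  apply le_antisymm (Finset.max'_le _ _ _ hmax) (Finset.le_max' _ _ hm)

lemma prv_mem {S : Finset ℤ} (hS : S.Nonempty) (p : ℤ) : prv S p ∈ S := by
  by_cases h1 : (S.filter (· < p)).Nonempty
  · rw [prv, dif_pos h1]
    exact Finset.mem_of_mem_filter _ (Finset.max'_mem _ h1)
  · rw [prv, dif_neg h1, dif_pos hS]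
    exact Finset.max'_mem _ hS

lemma nxt_prv {S : Finset ℤ} {p : ℤ} (hp : p ∈ S) : nxt S (prv S p) = p := by
  have hS : S.Nonempty := ⟨p, hp⟩
  by_cases h1 : (S.filter (· < p)).Nonempty
  · have hm : prv S p = (S.filter (· < p)).max' h1 := by rw [prv, dif_pos h1]
    have hmS : (S.filter (· < p)).max' h1 ∈ S.filter (· < p) := Finset.max'_mem _ h1
    rcases Finset.mem_filter.1 hmS with ⟨hmS', hmp⟩
    rw [hm]
    apply nxt_eq_of S _ p hp hmp
    intro z hz hmz
    by_contra hzp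
    push_neg at hzp
    have hzf : z ∈ S.filter (· < p) := by
      simp only [Finset.mem_filter]
      exact ⟨hz, hzp⟩
    have : z ≤ (S.filter (· < p)).max' h1 := Finset.le_max' _ _ hzf
    omega
  · -- p is the minimum of S
    have hpmin : ∀ z ∈ S, p ≤ z := by
      intro z hz
      by_contra hc
      refine h1 ⟨z, ?_⟩
      simp only [Finset.mem_filter]
      exact ⟨hz, by omega⟩
    have hm : prv S p = S.max' hS := by rw [prv, dif_neg h1, dif_pos hS]
    rw [hm]
    apply nxt_eq_min_of S _ p hS _ hp hpmin
    intro z hz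
    have := Finset.le_max' S z hz
    omega
lemma chain_exists (n : ℤ) :
    ∀ (k : ℕ) (S : Finset ℤ), S.card = k + 1 →
    (∀ a ∈ S, ∀ b ∈ S, a % n = b % n → a = b) →
    ∃ l : List (Equiv.Perm ℤ), l.length + 1 = S.card ∧ (∀ t ∈ l, t ∈ TSet n) ∧
      (∀ x : ℤ, (∀ p ∈ S, ¬ x % n = p % n) → l.prod x = x) ∧
      (∀ x p : ℤ, p ∈ S → x % n = p % n → l.prod x = x + (nxt S p - p)) := by
  intro k
  induction k using Nat.strong_induction_on with
  | _ k IH =>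
    intro S hcard hres
    rcases Nat.eq_zero_or_pos k with hk0 | hkpos
    · -- base : S is a singleton
      subst hk0
      obtain ⟨a, hSa⟩ := Finset.card_eq_one.mp hcard
      subst hSa
      refine ⟨[], by simp, by simp, ?_, ?_⟩
      · intro x _; simp
      · intro x p hp hxp
        rw [Finset.mem_singleton] at hp
        subst hp
        have hflt : ¬ (({p} : Finset ℤ).filter (p < ·)).Nonempty := by
          rintro ⟨z, hz⟩
          rw [Finset.mem_filter, Finset.mem_singleton] at hz
          omega
        have : nxt {p} p = p := by
          rw [nxt, dif_neg hflt, dif_pos ⟨p, Finset.mem_singleton_self p⟩]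
          simp
        rw [this]
        simp
    · -- step
      have hS : S.Nonempty := Finset.card_pos.mp (by omega)
      have h2 : 1 < S.card := by omega
      set a := S.min' hS with hadef
      have haS : a ∈ S := Finset.min'_mem _ _
      have hamin : ∀ z ∈ S, a ≤ z := fun z hz => Finset.min'_le _ _ hz
      have hfil : (S.filter (a < ·)).Nonempty := by
        obtain ⟨u, hu, v, hv, huv⟩ := Finset.one_lt_card.mp h2
        rcases eq_or_ne u a with rfl | hne
        · exact ⟨v, by simp only [Finset.mem_filter]; exact ⟨hv, lt_of_le_of_ne (hamin v hv) huv⟩⟩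
        · exact ⟨u, by simp only [Finset.mem_filter]; exact ⟨hu, lt_of_le_of_ne (hamin u hu) (Ne.symm hne)⟩⟩
      set b := (S.filter (a < ·)).min' hfil with hbdef
      have hbf : b ∈ S.filter (a < ·) := Finset.min'_mem _ _
      have hbS : b ∈ S := (Finset.mem_filter.1 hbf).1
      have hab : a < b := (Finset.mem_filter.1 hbf).2
      have hble : ∀ z ∈ S, a < z → b ≤ z := by
        intro z hz haz
        exact Finset.min'_le _ _ (by simp only [Finset.mem_filter]; exact ⟨hz, haz⟩)
      have habres : ¬ a % n = b % n := fun h => by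
        have := hres a haS b hbS h; omega
      -- the erased set
      have hbS' : b ∉ S.erase b := Finset.notMem_erase _ _
      have haS' : a ∈ S.erase b := Finset.mem_erase.2 ⟨by omega, haS⟩
      have hS' : (S.erase b).Nonempty := ⟨a, haS'⟩
      have hcard' : (S.erase b).card = (k - 1) + 1 := by
        rw [Finset.card_erase_of_mem hbS]; omega
      have hres' : ∀ x ∈ S.erase b, ∀ y ∈ S.erase b, x % n = y % n → x = y := by
        intro x hx y hy h
        exact hres x (Finset.mem_of_mem_erase hx) y (Finset.mem_of_mem_erase hy) h
      obtain ⟨l', hlen', hT', hfix', hcls'⟩ := IH (k - 1) (by omega) (S.erase b) hcard' hres'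
      -- key nxt computations
      have hnxt_a : nxt S a = b := nxt_eq_of S a b hbS hab hble
      have hmem_erase : ∀ z ∈ S, z ≠ b → z ∈ S.erase b := fun z hz hzb => Finset.mem_erase.2 ⟨hzb, hz⟩
      have hclaim_i : nxt (S.erase b) a = nxt S b := by
        by_cases hbig : (S.filter (b < ·)).Nonempty
        · have hmf : (S.filter (b < ·)).min' hbig ∈ S.filter (b < ·) := Finset.min'_mem _ _
          have hmS : (S.filter (b < ·)).min' hbig ∈ S := (Finset.mem_filter.1 hmf).1
          have hbm : b < (S.filter (b < ·)).min' hbig := (Finset.mem_filter.1 hmf).2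
          have hmle : ∀ z ∈ S, b < z → (S.filter (b < ·)).min' hbig ≤ z := by
            intro z hz hbz
            exact Finset.min'_le _ _ (by simp only [Finset.mem_filter]; exact ⟨hz, hbz⟩)
          rw [nxt_eq_of S b _ hmS hbm hmle]
          apply nxt_eq_of _ _ _ (hmem_erase _ hmS (by omega)) (by omega)
          intro z hz haz
          have hzS := Finset.mem_of_mem_erase hz
          have hzb := (Finset.mem_erase.1 hz).1
          have := hble z hzS haz
          exact hmle z hzS (by omega)
        · have hmax : ∀ z ∈ S, ¬ b < z := by
            intro z hz hc
            exact hbig ⟨z, by simp only [Finset.mem_filter]; exact ⟨hz, hc⟩⟩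
          rw [nxt_eq_min_of S b a hS hmax haS hamin]
          apply nxt_eq_min_of _ _ _ hS' _ haS'
          · intro z hz
            exact hamin z (Finset.mem_of_mem_erase hz)
          · intro z hz hc
            have hzS := Finset.mem_of_mem_erase hz
            have hzb := (Finset.mem_erase.1 hz).1
            have := hble z hzS hc
            exact hmax z hzS (by omega)
      have hclaim_ii : ∀ p ∈ S, p ≠ a → p ≠ b → nxt (S.erase b) p = nxt S p := by
        intro p hp hpa hpb
        have hap : a < p := lt_of_le_of_ne (hamin p hp) (Ne.symm hpa)
        have hbp : b < p := lt_of_le_of_ne (hble p hp hap) (Ne.symm hpb)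
        by_cases hpf : (S.filter (p < ·)).Nonempty
        · have hmf : (S.filter (p < ·)).min' hpf ∈ S.filter (p < ·) := Finset.min'_mem _ _
          have hmS : (S.filter (p < ·)).min' hpf ∈ S := (Finset.mem_filter.1 hmf).1
          have hpm : p < (S.filter (p < ·)).min' hpf := (Finset.mem_filter.1 hmf).2
          have hmle : ∀ z ∈ S, p < z → (S.filter (p < ·)).min' hpf ≤ z := by
            intro z hz hpz
            exact Finset.min'_le _ _ (by simp only [Finset.mem_filter]; exact ⟨hz, hpz⟩)
          rw [nxt_eq_of S p _ hmS hpm hmle]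
          apply nxt_eq_of _ _ _ (hmem_erase _ hmS (by omega)) hpm
          intro z hz hpz
          exact hmle z (Finset.mem_of_mem_erase hz) hpz
        · have hmax : ∀ z ∈ S, ¬ p < z := by
            intro z hz hc
            exact hpf ⟨z, by simp only [Finset.mem_filter]; exact ⟨hz, hc⟩⟩
          rw [nxt_eq_min_of S p a hS hmax haS hamin]
          apply nxt_eq_min_of _ _ _ hS' _ haS'
          · intro z hz
            exact hamin z (Finset.mem_of_mem_erase hz)
          · intro z hz
            exact hmax z (Finset.mem_of_mem_erase hz)
      refine ⟨l' ++ [reflN n a b], ?_, ?_, ?_, ?_⟩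
      · simp only [List.length_append, List.length_singleton]
        rw [Finset.card_erase_of_mem hbS] at hlen'
        omega
      · intro t ht
        rcases List.mem_append.1 ht with ht' | ht'
        · exact hT' t ht'
        · rw [List.mem_singleton] at ht'
          subst ht'
          exact reflN_mem_TSet n a b habres
      all_goals
        have hprodeq : ∀ x : ℤ, (l' ++ [reflN n a b]).prod x = l'.prod (reflN n a b x) := by
          intro x
          rw [List.prod_append, List.prod_singleton, Equiv.Perm.mul_apply]
      · -- fixed points
        intro x hx
        rw [hprodeq]
        have hxa : ¬ x % n = a % n := hx a haS
        have hxb : ¬ x % n = b % n := hx b hbS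
        rw [reflN_apply n a b habres, if_neg hxa, if_neg hxb, add_zero]
        apply hfix'
        intro p hp
        exact hx p (Finset.mem_of_mem_erase hp)
      · -- points in a residue class of S
        intro x p hp hxp
        rw [hprodeq]
        rcases eq_or_ne p a with rfl | hpa
        · -- p = a
          have hxb : ¬ x % n = b % n := fun h => habres (hxp ▸ h)
          rw [reflN_apply n a b habres, if_pos hxp, hnxt_a]
          have hres2 : (x + (b - a)) % n = b % n := emod_shift n x a b hxp
          rw [hfix']
          intro q hq
          intro hc
          have hqS := Finset.mem_of_mem_erase hq
          have : q = b := hres q hqS b hbS (by rw [← hc, hres2])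
          exact (Finset.mem_erase.1 hq).1 this
        rcases eq_or_ne p b with rfl | hpb
        · -- p = b
          have hxa : ¬ x % n = a % n := fun h => habres ((hxp ▸ h).symm)
          rw [reflN_apply n a b habres, if_neg hxa, if_pos hxp]
          have hres2 : (x + (a - b)) % n = a % n := emod_shift n x b a hxp
          rw [hcls' _ a haS' hres2, hclaim_i]
          ring
        · -- p other
          have hxa : ¬ x % n = a % n := fun h => hpa (hres p hp a haS (by rw [hxp] at h; exact h))
          have hxb : ¬ x % n = b % n := fun h => hpb (hres p hp b hbS (by rw [hxp] at h; exact h))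
          rw [reflN_apply n a b habres, if_neg hxa, if_neg hxb, add_zero]
          rw [hcls' _ p (hmem_erase p hp hpb) hxp, hclaim_ii p hp hpa hpb]
lemma prod_reverse_invol (l : List (Equiv.Perm ℤ)) (h : ∀ t ∈ l, t⁻¹ = t) :
    l.reverse.prod = (l.prod)⁻¹ := by
  induction l with
  | nil => simp
  | cons t l ih =>
    have h1 : t⁻¹ = t := h t (List.mem_cons_self)
    have h2 : ∀ s ∈ l, s⁻¹ = s := fun s hs => h s (List.mem_cons_of_mem _ hs)
    rw [List.reverse_cons, List.prod_append, List.prod_singleton, List.prod_cons,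
      mul_inv_rev, ih h2, h1]

lemma TSet_inv {n : ℤ} {t : Equiv.Perm ℤ} (ht : t ∈ TSet n) : t⁻¹ = t := by
  obtain ⟨a, b, hab, rfl⟩ := ht
  exact reflN_inv n a b

lemma chain_exists_inv (n : ℤ) (S : Finset ℤ) (hS : S.Nonempty)
    (hres : ∀ a ∈ S, ∀ b ∈ S, a % n = b % n → a = b) :
    ∃ l : List (Equiv.Perm ℤ), l.length + 1 = S.card ∧ (∀ t ∈ l, t ∈ TSet n) ∧
      (∀ x : ℤ, (∀ p ∈ S, ¬ x % n = p % n) → l.prod x = x) ∧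
      (∀ x p : ℤ, p ∈ S → x % n = p % n → l.prod x = x + (prv S p - p)) := by
  have hcard : S.card = (S.card - 1) + 1 := by
    have := Finset.card_pos.mpr hS; omega
  obtain ⟨l, hlen, hT, hfix, hcls⟩ := chain_exists n (S.card - 1) S hcard hres
  have hrevprod : l.reverse.prod = (l.prod)⁻¹ :=
    prod_reverse_invol l (fun t ht => TSet_inv (hT t ht))
  refine ⟨l.reverse, by simpa using hlen, fun t ht => hT t (List.mem_reverse.1 ht), ?_, ?_⟩
  · intro x hx
    rw [hrevprod]
    calc (l.prod)⁻¹ x = (l.prod)⁻¹ (l.prod x) := by rw [hfix x hx]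
    _ = x := Equiv.symm_apply_apply _ _
  · intro x p hp hxp
    rw [hrevprod]
    have hprv : prv S p ∈ S := prv_mem ⟨p, hp⟩ p
    have hres2 : (x + (prv S p - p)) % n = (prv S p) % n := emod_shift n x p (prv S p) hxp
    have key : l.prod (x + (prv S p - p)) = x := by
      rw [hcls _ (prv S p) hprv hres2, nxt_prv hp]
      ring
    calc (l.prod)⁻¹ x = (l.prod)⁻¹ (l.prod (x + (prv S p - p))) := by rw [key]
    _ = x + (prv S p - p) := Equiv.symm_apply_apply _ _
lemma absLower (n : ℤ) (hn : 2 ≤ n) (Out Inn : Finset ℤ)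
    (hunion : Out ∪ Inn = Finset.Icc (1 : ℤ) n) (hdisj : Disjoint Out Inn)
    (hOut : Out.Nonempty) (hInn : Inn.Nonempty)
    (c : Equiv.Perm ℤ)
    (hcOut : ∀ x ∈ Out, c x =
      if h : (Out.filter (x < ·)).Nonempty then (Out.filter (x < ·)).min' h
      else Out.min' hOut + n)
    (hcInn : ∀ x ∈ Inn, c x =
      if h : (Inn.filter (· < x)).Nonempty then (Inn.filter (· < x)).max' h
      else Inn.max' hInn - n)
    (l : List (Equiv.Perm ℤ)) (hT : ∀ t ∈ l, t ∈ TSet n) (hprod : l.prod = c) :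
    n.toNat ≤ l.length := by
  by_contra hlt
  push_neg at hlt
  have hn0 : (0:ℤ) < n := by omega
  have hnne : n ≠ 0 := by omega
  have hsub : ∀ z, z ∈ Out ∨ z ∈ Inn → z ∈ Finset.Icc (1:ℤ) n := by
    intro z hz
    rw [← hunion]
    rcases hz with h | h
    · exact Finset.mem_union_left _ h
    · exact Finset.mem_union_right _ h
  -- index of a residue class
  have hresidx : ∀ x : ℤ, (x % n).toNat < n.toNat := by
    intro x
    have h0 : 0 ≤ x % n := Int.emod_nonneg x hnne
    have h1 : x % n < n := Int.emod_lt_of_pos x hn0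
    omega
  -- choose the reflection data
  have hex : ∀ k : Fin l.length, ∃ a b : ℤ, ¬ a % n = b % n ∧ l.get k = reflN n a b :=
    fun k => hT _ (l.get_mem k)
  choose A B hAB hRefl using hex
  -- the twisted function associated to a vector
  set GV : (Fin n.toNat → ℚ) → ℤ → ℚ :=
    fun v x => (2:ℚ) ^ (x / n) * v ⟨(x % n).toNat, hresidx x⟩ with hGV
  have hGVadd : ∀ v w x, GV (v + w) x = GV v x + GV w x := by
    intro v w x
    simp only [hGV, Pi.add_apply, mul_add]
  have hGVsmul : ∀ (r : ℚ) v x, GV (r • v) x = r * GV v x := by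
    intro r v x
    simp only [hGV, Pi.smul_apply, smul_eq_mul]
    ring
  set Φ : (Fin n.toNat → ℚ) →ₗ[ℚ] (Fin l.length → ℚ) :=
    { toFun := fun v k => GV v (A k) - GV v (B k)
      map_add' := by
        intro v w
        funext k
        simp only [hGVadd, Pi.add_apply]
        ring
      map_smul' := by
        intro r v
        funext k
        simp only [hGVsmul, Pi.smul_apply, smul_eq_mul, RingHom.id_apply]
        ring } with hPhi
  -- the kernel of Φ is nontrivial
  have hker : ∃ v : Fin n.toNat → ℚ, v ∈ LinearMap.ker Φ ∧ v ≠ 0 := by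
    apply Submodule.exists_mem_ne_zero_of_ne_bot
    intro hbot
    have h1 := LinearMap.finrank_range_add_finrank_ker Φ
    have h2 : Module.finrank ℚ (Fin n.toNat → ℚ) = n.toNat := by
      rw [Module.finrank_pi, Fintype.card_fin]
    have h3 : Module.finrank ℚ (LinearMap.ker Φ) = 0 := by
      rw [hbot, finrank_bot]
    have h4 : Module.finrank ℚ (LinearMap.range Φ) ≤ l.length := by
      have := Submodule.finrank_le (LinearMap.range Φ)
      rwa [Module.finrank_pi, Fintype.card_fin] at this
    omega
  obtain ⟨v, hvker, hvne⟩ := hker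
  set g : ℤ → ℚ := GV v with hg
  -- periodicity of g
  have hgshift : ∀ (y k : ℤ), g (y + k * n) = (2:ℚ) ^ k * g y := by
    intro y k
    have hdiv : (y + k * n) / n = y / n + k := Int.add_mul_ediv_right y k hnne
    have hmod : (y + k * n) % n = y % n := by
      rw [show y + k * n = y + n * k by ring, Int.add_mul_emod_self_left]
    simp only [hg, hGV, hdiv, hmod]
    rw [zpow_add₀ (by norm_num : (2:ℚ) ≠ 0)]
    ring
  -- g is invariant under each reflection of the list
  have hgt : ∀ t ∈ l, ∀ x, g (t x) = g x := by
    intro t ht x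
    obtain ⟨k, hk⟩ := List.mem_iff_get.1 ht
    have hab := hAB k
    have htr : t = reflN n (A k) (B k) := by rw [← hk, hRefl k]
    have hgAB : g (A k) = g (B k) := by
      have := hvker
      rw [LinearMap.mem_ker] at this
      have h1 : Φ v k = 0 := by rw [this]; rfl
      have h2 : GV v (A k) - GV v (B k) = 0 := h1
      simp only [hg]
      linarith
    rw [htr, reflN_apply n (A k) (B k) hab x]
    by_cases h1 : x % n = A k % n
    · rw [if_pos h1]
      obtain ⟨m, hm⟩ := emod_eq_add_mul n x (A k) hnne h1
      have hx2 : x + (B k - A k) = B k + m * n := by omega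
      rw [hx2, hm, hgshift, hgshift, hgAB]
    · rw [if_neg h1]
      by_cases h2 : x % n = B k % n
      · rw [if_pos h2]
        obtain ⟨m, hm⟩ := emod_eq_add_mul n x (B k) hnne h2
        have hx2 : x + (A k - B k) = A k + m * n := by omega
        rw [hx2, hm, hgshift, hgshift, hgAB]
      · rw [if_neg h2, add_zero]
  -- hence g is invariant under c
  have hgc : ∀ x, g (c x) = g x := by
    have : ∀ (L : List (Equiv.Perm ℤ)), (∀ t ∈ L, ∀ x, g (t x) = g x) →
        ∀ x, g (L.prod x) = g x := by
      intro L
      induction L with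
      | nil => intro _ x; simp
      | cons t L ih =>
        intro h x
        rw [List.prod_cons, Equiv.Perm.mul_apply, h t (List.mem_cons_self),
          ih (fun s hs => h s (List.mem_cons_of_mem _ hs))]
    intro x
    rw [← hprod]
    exact this l hgt x
  -- g vanishes on Out
  have houtmax : ∀ K : ℕ, ∀ o ∈ Out, (Out.filter (o < ·)).card = K →
      g o = g (Out.max' hOut) := by
    intro K
    induction K using Nat.strong_induction_on with
    | _ K IH =>
      intro o ho hK
      by_cases hfo : (Out.filter (o < ·)).Nonempty
      · have hco : c o = (Out.filter (o < ·)).min' hfo := by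
          rw [hcOut o ho, dif_pos hfo]
        have hbmem : (Out.filter (o < ·)).min' hfo ∈ Out.filter (o < ·) := Finset.min'_mem _ _
        have hbO : (Out.filter (o < ·)).min' hfo ∈ Out := (Finset.mem_filter.1 hbmem).1
        have hob : o < (Out.filter (o < ·)).min' hfo := (Finset.mem_filter.1 hbmem).2
        have hssub : Out.filter ((Out.filter (o < ·)).min' hfo < ·) ⊂ Out.filter (o < ·) := by
          constructor
          · intro z hz
            rcases Finset.mem_filter.1 hz with ⟨h1, h2⟩
            exact Finset.mem_filter.2 ⟨h1, by omega⟩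
          · intro hcon
            have := hcon hbmem
            rcases Finset.mem_filter.1 this with ⟨_, h2⟩
            omega
        have hcard := Finset.card_lt_card hssub
        rw [hK] at hcard
        have := IH _ hcard _ hbO rfl
        rw [← this, ← hco]
        exact (hgc o).symm ▸ (hgc o)
      · -- o is the maximum
        have homax : o = Out.max' hOut := by
          have h1 := Finset.le_max' Out o ho
          have h2 : ∀ z ∈ Out, z ≤ o := by
            intro z hz
            by_contra hc
            exact hfo ⟨z, Finset.mem_filter.2 ⟨hz, by omega⟩⟩
          have := h2 _ (Finset.max'_mem Out hOut)
          omega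
        rw [homax]
  have hgmax0 : g (Out.max' hOut) = 0 := by
    have hM : Out.max' hOut ∈ Out := Finset.max'_mem _ _
    have hfo : ¬ (Out.filter (Out.max' hOut < ·)).Nonempty := by
      rintro ⟨z, hz⟩
      rcases Finset.mem_filter.1 hz with ⟨h1, h2⟩
      have := Finset.le_max' Out z h1
      omega
    have hcM : c (Out.max' hOut) = Out.min' hOut + n := by
      rw [hcOut _ hM, dif_neg hfo]
    have h1 : g (Out.min' hOut + n) = g (Out.max' hOut) := by
      rw [← hcM]; exact hgc _
    have h2 : g (Out.min' hOut + n) = 2 * g (Out.min' hOut) := by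
      have := hgshift (Out.min' hOut) 1
      simpa using this
    have h3 : g (Out.min' hOut) = g (Out.max' hOut) :=
      houtmax _ _ (Finset.min'_mem _ _) rfl
    rw [h2, h3] at h1
    linarith
  have hgOut : ∀ o ∈ Out, g o = 0 := by
    intro o ho
    rw [houtmax _ o ho rfl, hgmax0]
  -- g vanishes on Inn
  have hinnmin : ∀ K : ℕ, ∀ y ∈ Inn, (Inn.filter (· < y)).card = K →
      g y = g (Inn.min' hInn) := by
    intro K
    induction K using Nat.strong_induction_on with
    | _ K IH =>
      intro y hy hK
      by_cases hfy : (Inn.filter (· < y)).Nonempty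
      · have hcy : c y = (Inn.filter (· < y)).max' hfy := by
          rw [hcInn y hy, dif_pos hfy]
        have hdmem : (Inn.filter (· < y)).max' hfy ∈ Inn.filter (· < y) := Finset.max'_mem _ _
        have hdI : (Inn.filter (· < y)).max' hfy ∈ Inn := (Finset.mem_filter.1 hdmem).1
        have hdy : (Inn.filter (· < y)).max' hfy < y := (Finset.mem_filter.1 hdmem).2
        have hssub : Inn.filter (· < (Inn.filter (· < y)).max' hfy) ⊂ Inn.filter (· < y) := by
          constructor
          · intro z hz
            rcases Finset.mem_filter.1 hz with ⟨h1, h2⟩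
            exact Finset.mem_filter.2 ⟨h1, by omega⟩
          · intro hcon
            have := hcon hdmem
            rcases Finset.mem_filter.1 this with ⟨_, h2⟩
            omega
        have hcard := Finset.card_lt_card hssub
        rw [hK] at hcard
        have := IH _ hcard _ hdI rfl
        rw [← this, ← hcy]
        exact (hgc y).symm ▸ (hgc y)
      · have hymin : y = Inn.min' hInn := by
          have h2 : ∀ z ∈ Inn, y ≤ z := by
            intro z hz
            by_contra hc
            exact hfy ⟨z, Finset.mem_filter.2 ⟨hz, by omega⟩⟩
          have h1 := Finset.min'_le Inn y hy
          have := h2 _ (Finset.min'_mem Inn hInn)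
          omega
        rw [hymin]
  have hgmin0 : g (Inn.min' hInn) = 0 := by
    have hM : Inn.min' hInn ∈ Inn := Finset.min'_mem _ _
    have hfy : ¬ (Inn.filter (· < Inn.min' hInn)).Nonempty := by
      rintro ⟨z, hz⟩
      rcases Finset.mem_filter.1 hz with ⟨h1, h2⟩
      have := Finset.min'_le Inn z h1
      omega
    have hcM : c (Inn.min' hInn) = Inn.max' hInn - n := by
      rw [hcInn _ hM, dif_neg hfy]
    have h1 : g (Inn.max' hInn - n) = g (Inn.min' hInn) := by
      rw [← hcM]; exact hgc _
    have h2 : g (Inn.max' hInn - n) = (2:ℚ)⁻¹ * g (Inn.max' hInn) := by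
      have := hgshift (Inn.max' hInn - n) 1
      have heq : Inn.max' hInn - n + 1 * n = Inn.max' hInn := by ring
      rw [heq] at this
      rw [this]
      norm_num
      ring
    have h3 : g (Inn.max' hInn) = g (Inn.min' hInn) :=
      hinnmin _ _ (Finset.max'_mem _ _) rfl
    rw [h3] at h2
    rw [h2] at h1
    linarith
  have hgInn : ∀ y ∈ Inn, g y = 0 := by
    intro y hy
    rw [hinnmin _ y hy rfl, hgmin0]
  -- g vanishes on all base points, hence v = 0
  have hgIcc : ∀ y ∈ Finset.Icc (1:ℤ) n, g y = 0 := by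
    intro y hy
    rw [← hunion] at hy
    rcases Finset.mem_union.1 hy with h | h
    · exact hgOut y h
    · exact hgInn y h
  apply hvne
  funext r
  have hrN : (r : ℕ) < n.toNat := r.2
  by_cases hr0 : (r : ℕ) = 0
  · -- use y = n
    have hgn : g n = 0 := hgIcc n (by simp [Finset.mem_Icc]; omega)
    have : g n = (2:ℚ) ^ (1:ℤ) * v r := by
      simp only [hg, hGV]
      congr 1
      · congr 1
        exact Int.ediv_self hnne
      · congr 1
        apply Fin.ext
        simp [Int.emod_self, hr0]
    rw [hgn] at this
    have h2 : ((2:ℚ) ^ (1:ℤ)) ≠ 0 := by norm_num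
    simp only [Pi.zero_apply]
    field_simp at this
    linarith [this]
  · -- use y = r
    have hy1 : (1:ℤ) ≤ (r : ℕ) := by exact_mod_cast Nat.one_le_iff_ne_zero.2 hr0
    have hyn : ((r : ℕ) : ℤ) < n := by omega
    have hgr : g ((r : ℕ) : ℤ) = 0 := hgIcc _ (by simp [Finset.mem_Icc]; omega)
    have : g ((r : ℕ) : ℤ) = v r := by
      have hidx : (⟨((((r:ℕ):ℤ)) % n).toNat, hresidx (((r:ℕ):ℤ))⟩ : Fin n.toNat) = r := by
        apply Fin.ext
        have hmd : (((r:ℕ):ℤ)) % n = ((r:ℕ):ℤ) := Int.emod_eq_of_lt (by omega) hyn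
        simp only [hmd]
        omega
      simp only [hg, hGV]
      rw [hidx, Int.ediv_eq_zero_of_lt (by omega) hyn, zpow_zero, one_mul]
    rw [hgr] at this
    simp only [Pi.zero_apply]
    exact this.symm
lemma factorizationTC (n : ℤ) (hn : 2 ≤ n) (Out Inn : Finset ℤ)
    (hunion : Out ∪ Inn = Finset.Icc (1 : ℤ) n) (hdisj : Disjoint Out Inn)
    (hOut : Out.Nonempty) (hInn : Inn.Nonempty)
    (c : Equiv.Perm ℤ) (hcper : ∀ x : ℤ, c (x + n) = c x + n)
    (hcOut : ∀ x ∈ Out, c x =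
      if h : (Out.filter (x < ·)).Nonempty then (Out.filter (x < ·)).min' h
      else Out.min' hOut + n)
    (hcInn : ∀ x ∈ Inn, c x =
      if h : (Inn.filter (· < x)).Nonempty then (Inn.filter (· < x)).max' h
      else Inn.max' hInn - n)
    (i j : ℤ) (hi : i ∈ Out) (hj : j ∈ Inn)
    (τ : Equiv.Perm ℤ) (hτ : τ = reflN n i j * reflN n i (j + n))
    (htauinv : ∀ x : ℤ, τ⁻¹ x = x + (if x % n = i % n then -n else if x % n = j % n then n else 0)) :
    ∃ lw : List (Equiv.Perm ℤ), lw.length + 2 = n.toNat ∧ (∀ t ∈ lw, t ∈ TSet n) ∧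
      lw.prod = τ⁻¹ * c := by
  have hn0 : (0:ℤ) < n := by omega
  have hnne : n ≠ 0 := by omega
  have hmemIcc : ∀ z : ℤ, z ∈ Out ∨ z ∈ Inn → 1 ≤ z ∧ z ≤ n := by
    intro z hz
    have : z ∈ Finset.Icc (1:ℤ) n := by
      rw [← hunion]
      rcases hz with h | h
      · exact Finset.mem_union_left _ h
      · exact Finset.mem_union_right _ h
    simpa [Finset.mem_Icc] using this
  have hinj2 : ∀ a b : ℤ, (a ∈ Out ∨ a ∈ Inn) → (b ∈ Out ∨ b ∈ Inn) → a % n = b % n → a = b := by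
    intro a b ha hb h
    apply icc_emod_inj hn0 _ _ h
    · simp [Finset.mem_Icc]; exact hmemIcc a ha
    · simp [Finset.mem_Icc]; exact hmemIcc b hb
  have hOutInn : ∀ a b : ℤ, a ∈ Out → b ∈ Inn → ¬ a % n = b % n := by
    intro a b ha hb h
    have := hinj2 a b (Or.inl ha) (Or.inr hb) h
    subst this
    exact (Finset.disjoint_left.1 hdisj ha) hb
  have hib := hmemIcc i (Or.inl hi)
  have hjb := hmemIcc j (Or.inr hj)
  -- extension of periodicity
  have hcext : ∀ (x k : ℤ), c (x + k * n) = c x + k * n := by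
    intro x k
    induction k using Int.induction_on with
    | zero => simp
    | succ m ih =>
      have he : x + (m + 1 : ℤ) * n = (x + m * n) + n := by ring
      rw [he, hcper, ih]; ring
    | pred m ih =>
      have hper := hcper (x + (-(m:ℤ) - 1) * n)
      have he2 : x + (-(m:ℤ) - 1) * n + n = x + -(m:ℤ) * n := by ring
      rw [he2] at hper
      rw [ih] at hper
      linarith
  -- the rotated outer and inner point sets
  set f : ℤ → ℤ := fun o => if o < i then o + n else o with hf
  set gm : ℤ → ℤ := fun y => if j < y then y - n else y with hgm
  set Pout : Finset ℤ := Out.image f with hPout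
  set Qinn : Finset ℤ := Inn.image gm with hQinn
  have hfres : ∀ o : ℤ, f o % n = o % n := by
    intro o
    by_cases h : o < i
    · simp only [hf, if_pos h, emod_add_n]
    · simp only [hf, if_neg h]
  have hgres : ∀ y : ℤ, gm y % n = y % n := by
    intro y
    by_cases h : j < y
    · simp only [hgm, if_pos h, emod_sub_n]
    · simp only [hgm, if_neg h]
  have hPmem : ∀ z ∈ Pout, ∃ o ∈ Out, f o = z := by
    intro z hz
    rcases Finset.mem_image.1 hz with ⟨o, ho, hfo⟩
    exact ⟨o, ho, hfo⟩
  have hQmem : ∀ z ∈ Qinn, ∃ y ∈ Inn, gm y = z := by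
    intro z hz
    rcases Finset.mem_image.1 hz with ⟨y, hy, hgy⟩
    exact ⟨y, hy, hgy⟩
  have hPres : ∀ a ∈ Pout, ∀ b ∈ Pout, a % n = b % n → a = b := by
    intro a ha b hb h
    obtain ⟨o₁, ho₁, rfl⟩ := hPmem a ha
    obtain ⟨o₂, ho₂, rfl⟩ := hPmem b hb
    rw [hfres o₁, hfres o₂] at h
    rw [hinj2 o₁ o₂ (Or.inl ho₁) (Or.inl ho₂) h]
  have hQres : ∀ a ∈ Qinn, ∀ b ∈ Qinn, a % n = b % n → a = b := by
    intro a ha b hb h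
    obtain ⟨y₁, hy₁, rfl⟩ := hQmem a ha
    obtain ⟨y₂, hy₂, rfl⟩ := hQmem b hb
    rw [hgres y₁, hgres y₂] at h
    rw [hinj2 y₁ y₂ (Or.inr hy₁) (Or.inr hy₂) h]
  have hPcard : Pout.card = Out.card := by
    apply Finset.card_image_of_injOn
    intro o₁ h₁ o₂ h₂ he
    have : o₁ % n = o₂ % n := by rw [← hfres o₁, ← hfres o₂, he]
    exact hinj2 o₁ o₂ (Or.inl h₁) (Or.inl h₂) this
  have hQcard : Qinn.card = Inn.card := by
    apply Finset.card_image_of_injOn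
    intro y₁ h₁ y₂ h₂ he
    have : y₁ % n = y₂ % n := by rw [← hgres y₁, ← hgres y₂, he]
    exact hinj2 y₁ y₂ (Or.inr h₁) (Or.inr h₂) this
  have hPne : Pout.Nonempty := ⟨f i, Finset.mem_image_of_mem f hi⟩
  have hQne : Qinn.Nonempty := ⟨gm j, Finset.mem_image_of_mem gm hj⟩
  have hPcard1 : Pout.card = (Pout.card - 1) + 1 := by
    have := Finset.card_pos.mpr hPne; omega
  obtain ⟨lP, hlenP, hTP, hfixP, hclsP⟩ := chain_exists n (Pout.card - 1) Pout hPcard1 hPres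
  obtain ⟨lQ, hlenQ, hTQ, hfixQ, hclsQ⟩ := chain_exists_inv n Qinn hQne hQres
  -- membership helpers
  have hfi : f i = i := by simp only [hf, if_neg (lt_irrefl i)]
  have hgj : gm j = j := by simp only [hgm, if_neg (lt_irrefl j)]
  have hiP : i ∈ Pout := by
    rw [← hfi]; exact Finset.mem_image_of_mem f hi
  have hjQ : j ∈ Qinn := by
    rw [← hgj]; exact Finset.mem_image_of_mem gm hj
  have hPmin : ∀ z ∈ Pout, i ≤ z := by
    intro z hz
    obtain ⟨o, ho, rfl⟩ := hPmem z hz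
    have hob := hmemIcc o (Or.inl ho)
    by_cases h : o < i
    · simp only [hf, if_pos h]; omega
    · simp only [hf, if_neg h]; omega
  have hQmax : ∀ z ∈ Qinn, z ≤ j := by
    intro z hz
    obtain ⟨y, hy, rfl⟩ := hQmem z hz
    have hyb := hmemIcc y (Or.inr hy)
    by_cases h : j < y
    · simp only [hgm, if_pos h]; omega
    · simp only [hgm, if_neg h]; omega
  refine ⟨lP ++ lQ, ?_, ?_, ?_⟩
  · -- length
    rw [List.length_append]
    have hc1 : Out.card + Inn.card = n.toNat := by
      have h1 : (Out ∪ Inn).card = Out.card + Inn.card := Finset.card_union_of_disjoint hdisj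
      rw [hunion] at h1
      rw [Int.card_Icc] at h1
      omega
    omega
  · intro t ht
    rcases List.mem_append.1 ht with h | h
    · exact hTP t h
    · exact hTQ t h
  · -- the product equals τ⁻¹ * c
    rw [List.prod_append]
    apply Equiv.ext
    intro x
    rw [Equiv.Perm.mul_apply, Equiv.Perm.mul_apply]
    obtain ⟨y, hyIcc, hxy⟩ := exists_rep hn0 x
    obtain ⟨k, hk⟩ := emod_eq_add_mul n x y hnne hxy
    have hyb : 1 ≤ y ∧ y ≤ n := by simpa [Finset.mem_Icc] using hyIcc
    have hyOI : y ∈ Out ∨ y ∈ Inn := by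
      have : y ∈ Out ∪ Inn := by rw [hunion]; exact hyIcc
      exact Finset.mem_union.1 this
    have hcx : c x = c y + k * n := by rw [hk, hcext]
    rcases hyOI with hyO | hyI
    · -- x is in an outer residue class
      have hQfix : lQ.prod x = x := by
        apply hfixQ
        intro q hq hc
        obtain ⟨y₂, hy₂, rfl⟩ := hQmem q hq
        rw [hgres y₂] at hc
        have : y = y₂ := hinj2 y y₂ (Or.inl hyO) (Or.inr hy₂) (by rw [← hxy, hc])
        subst this
        exact (Finset.disjoint_left.1 hdisj hyO) hy₂
      rw [hQfix]
      have hfyP : f y ∈ Pout := Finset.mem_image_of_mem f hyO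
      have hxfy : x % n = f y % n := by rw [hfres y]; exact hxy
      rw [hclsP x (f y) hfyP hxfy]
      -- now compute both sides
      by_cases hfo : (Out.filter (y < ·)).Nonempty
      · have hcy : c y = (Out.filter (y < ·)).min' hfo := by
          rw [hcOut y hyO, dif_pos hfo]
        have hbmem : (Out.filter (y < ·)).min' hfo ∈ Out.filter (y < ·) := Finset.min'_mem _ _
        have hbO : (Out.filter (y < ·)).min' hfo ∈ Out := (Finset.mem_filter.1 hbmem).1
        have hyb2 : y < (Out.filter (y < ·)).min' hfo := (Finset.mem_filter.1 hbmem).2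
        have hble : ∀ z ∈ Out, y < z → (Out.filter (y < ·)).min' hfo ≤ z := by
          intro z hz hyz
          have hmem : z ∈ Out.filter (y < ·) := by
            simp only [Finset.mem_filter]; exact ⟨hz, hyz⟩
          exact Finset.min'_le _ _ hmem
        set b := (Out.filter (y < ·)).min' hfo with hbdef
        have hbb := hmemIcc b (Or.inl hbO)
        have hcxb : c x = b + k * n := by rw [hcx, hcy]
        have hbresj : ¬ (b + k * n) % n = j % n := by
          rw [show b + k*n = b + n*k by ring, Int.add_mul_emod_self_left]
          exact hOutInn b j hbO hj
        by_cases hbi : b = i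
        · -- the new edge: τ⁻¹ pulls down by n
          have hbresi : (b + k * n) % n = i % n := by
            rw [show b + k*n = b + n*k by ring, Int.add_mul_emod_self_left, hbi]
          rw [hcxb, htauinv, if_pos hbresi]
          -- y < i since y < b = i
          have hyi : y < i := by omega
          have hfyy : f y = y + n := by simp only [hf, if_pos hyi]
          have hnxt : nxt Pout (f y) = i := by
            rw [hfyy]
            apply nxt_eq_min_of Pout (y + n) i hPne _ hiP hPmin
            intro z hz hlt
            obtain ⟨o, ho, rfl⟩ := hPmem z hz
            have hob := hmemIcc o (Or.inl ho)
            by_cases h : o < i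
            · simp only [hf, if_pos h] at hlt
              have : y < o := by omega
              have := hble o ho this
              omega
            · simp only [hf, if_neg h] at hlt
              omega
          rw [hnxt, hfyy]
          omega
        · -- no adjustment
          have hbresi : ¬ (b + k * n) % n = i % n := by
            rw [show b + k*n = b + n*k by ring, Int.add_mul_emod_self_left]
            intro hc
            exact hbi (hinj2 b i (Or.inl hbO) (Or.inl hi) hc)
          rw [hcxb, htauinv, if_neg hbresi, if_neg hbresj, add_zero]
          by_cases hyi : y < i
          · have hbltI : b ≤ i := hble i hi hyi
            have hbltI2 : b < i := by omega
            have hfyy : f y = y + n := by simp only [hf, if_pos hyi]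
            have hfb : f b = b + n := by simp only [hf, if_pos hbltI2]
            have hbP : b + n ∈ Pout := by
              rw [← hfb]; exact Finset.mem_image_of_mem f hbO
            have hnxt : nxt Pout (f y) = b + n := by
              rw [hfyy]
              apply nxt_eq_of Pout (y + n) (b + n) hbP (by omega)
              intro z hz hlt
              obtain ⟨o, ho, rfl⟩ := hPmem z hz
              have hob := hmemIcc o (Or.inl ho)
              by_cases h : o < i
              · simp only [hf, if_pos h] at hlt ⊢
                have := hble o ho (by omega)
                omega
              · simp only [hf, if_neg h] at hlt
                omega
            rw [hnxt, hfyy]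
            omega
          · have hfyy : f y = y := by simp only [hf, if_neg hyi]
            have hfb : f b = b := by simp only [hf, if_neg (by omega : ¬ b < i)]
            have hbP : b ∈ Pout := by
              rw [← hfb]; exact Finset.mem_image_of_mem f hbO
            have hnxt : nxt Pout (f y) = b := by
              rw [hfyy]
              apply nxt_eq_of Pout y b hbP (by omega)
              intro z hz hlt
              obtain ⟨o, ho, rfl⟩ := hPmem z hz
              have hob := hmemIcc o (Or.inl ho)
              by_cases h : o < i
              · simp only [hf, if_pos h]
                omega
              · simp only [hf, if_neg h] at hlt ⊢
                exact hble o ho hlt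
            rw [hnxt, hfyy]
            omega
      · -- y is the largest outer point
        have hymax : ∀ z ∈ Out, z ≤ y := by
          intro z hz
          by_contra hc
          refine hfo ⟨z, ?_⟩
          simp only [Finset.mem_filter]
          exact ⟨hz, by omega⟩
        have hiy : i ≤ y := hymax i hi
        have hcy : c y = Out.min' hOut + n := by
          rw [hcOut y hyO, dif_neg hfo]
        set a := Out.min' hOut with hadef
        have haO : a ∈ Out := Finset.min'_mem _ _
        have hamin : ∀ z ∈ Out, a ≤ z := fun z hz => Finset.min'_le _ _ hz
        have hab := hmemIcc a (Or.inl haO)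
        have hcxa : c x = a + n + k * n := by rw [hcx, hcy]
        have hares : (a + n + k * n) % n = a % n := by
          rw [show a + n + k*n = a + n*(1+k) by ring, Int.add_mul_emod_self_left]
        have haresj : ¬ (a + n + k * n) % n = j % n := by
          rw [hares]; exact hOutInn a j haO hj
        have hfyy : f y = y := by simp only [hf, if_neg (by omega : ¬ y < i)]
        by_cases hai : a = i
        · have haresi : (a + n + k * n) % n = i % n := by rw [hares, hai]
          rw [hcxa, htauinv, if_pos haresi]
          have hnxt : nxt Pout (f y) = i := by
            rw [hfyy]
            apply nxt_eq_min_of Pout y i hPne _ hiP hPmin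
            intro z hz hlt
            obtain ⟨o, ho, rfl⟩ := hPmem z hz
            have hob := hmemIcc o (Or.inl ho)
            by_cases h : o < i
            · have := hamin o ho; omega
            · simp only [hf, if_neg h] at hlt
              have := hymax o ho
              omega
          rw [hnxt, hfyy]
          omega
        · have haresi : ¬ (a + n + k * n) % n = i % n := by
            rw [hares]
            intro hc
            exact hai (hinj2 a i (Or.inl haO) (Or.inl hi) hc)
          rw [hcxa, htauinv, if_neg haresi, if_neg haresj, add_zero]
          have hai2 : a < i := by
            have := hamin i hi; omega
          have hfa : f a = a + n := by simp only [hf, if_pos hai2]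
          have haP : a + n ∈ Pout := by
            rw [← hfa]; exact Finset.mem_image_of_mem f haO
          have hnxt : nxt Pout (f y) = a + n := by
            rw [hfyy]
            apply nxt_eq_of Pout y (a + n) haP (by omega)
            intro z hz hlt
            obtain ⟨o, ho, rfl⟩ := hPmem z hz
            have hob := hmemIcc o (Or.inl ho)
            by_cases h : o < i
            · simp only [hf, if_pos h]
              have := hamin o ho
              omega
            · simp only [hf, if_neg h] at hlt
              have := hymax o ho
              omega
          rw [hnxt, hfyy]
          omega
    · -- x is in an inner residue class
      have hgyQ : gm y ∈ Qinn := Finset.mem_image_of_mem gm hyI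
      have hxgy : x % n = gm y % n := by rw [hgres y]; exact hxy
      rw [hclsQ x (gm y) hgyQ hxgy]
      have hprvQ : prv Qinn (gm y) ∈ Qinn := prv_mem hQne _
      have hPfix : lP.prod (x + (prv Qinn (gm y) - gm y)) = x + (prv Qinn (gm y) - gm y) := by
        apply hfixP
        intro p hp hc
        obtain ⟨o, ho, rfl⟩ := hPmem p hp
        obtain ⟨y₂, hy₂, hgy₂⟩ := hQmem _ hprvQ
        have hres2 : (x + (prv Qinn (gm y) - gm y)) % n = prv Qinn (gm y) % n :=
          emod_shift n x (gm y) _ hxgy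
        rw [hres2, ← hgy₂, hgres y₂, hfres o] at hc
        have : y₂ = o := hinj2 y₂ o (Or.inr hy₂) (Or.inl ho) hc
        subst this
        exact (Finset.disjoint_left.1 hdisj ho) hy₂
      rw [hPfix]
      -- now compute both sides
      by_cases hfy : (Inn.filter (· < y)).Nonempty
      · have hcy : c y = (Inn.filter (· < y)).max' hfy := by
          rw [hcInn y hyI, dif_pos hfy]
        have hdmem : (Inn.filter (· < y)).max' hfy ∈ Inn.filter (· < y) := Finset.max'_mem _ _
        have hdI : (Inn.filter (· < y)).max' hfy ∈ Inn := (Finset.mem_filter.1 hdmem).1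
        have hdy : (Inn.filter (· < y)).max' hfy < y := (Finset.mem_filter.1 hdmem).2
        have hdge : ∀ z ∈ Inn, z < y → z ≤ (Inn.filter (· < y)).max' hfy := by
          intro z hz hzy
          have hmem : z ∈ Inn.filter (· < y) := by
            simp only [Finset.mem_filter]; exact ⟨hz, hzy⟩
          exact Finset.le_max' _ _ hmem
        set d := (Inn.filter (· < y)).max' hfy with hddef
        have hdb := hmemIcc d (Or.inr hdI)
        have hcxd : c x = d + k * n := by rw [hcx, hcy]
        have hdresi : ¬ (d + k * n) % n = i % n := by
          rw [show d + k*n = d + n*k by ring, Int.add_mul_emod_self_left]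
          intro hc
          exact hOutInn i d hi hdI hc.symm
        by_cases hdj : d = j
        · have hdresj : (d + k * n) % n = j % n := by
            rw [show d + k*n = d + n*k by ring, Int.add_mul_emod_self_left, hdj]
          rw [hcxd, htauinv, if_neg hdresi, if_pos hdresj]
          have hjy : j < y := by omega
          have hgyy : gm y = y - n := by simp only [hgm, if_pos hjy]
          have hprv : prv Qinn (gm y) = j := by
            rw [hgyy]
            apply prv_eq_max_of Qinn (y - n) j hQne _ hjQ hQmax
            intro z hz hlt
            obtain ⟨y₂, hy₂, rfl⟩ := hQmem z hz
            have hy₂b := hmemIcc y₂ (Or.inr hy₂)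
            by_cases h : j < y₂
            · simp only [hgm, if_pos h] at hlt
              have : y₂ < y := by omega
              have := hdge y₂ hy₂ this
              omega
            · simp only [hgm, if_neg h] at hlt
              omega
          rw [hprv, hgyy]
          omega
        · have hdresj : ¬ (d + k * n) % n = j % n := by
            rw [show d + k*n = d + n*k by ring, Int.add_mul_emod_self_left]
            intro hc
            exact hdj (hinj2 d j (Or.inr hdI) (Or.inr hj) hc)
          rw [hcxd, htauinv, if_neg hdresi, if_neg hdresj, add_zero]
          by_cases hjy : j < y
          · have hjd : j ≤ d := hdge j hj hjy
            have hjd2 : j < d := by omega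
            have hgyy : gm y = y - n := by simp only [hgm, if_pos hjy]
            have hgd : gm d = d - n := by simp only [hgm, if_pos hjd2]
            have hdQ : d - n ∈ Qinn := by
              rw [← hgd]; exact Finset.mem_image_of_mem gm hdI
            have hprv : prv Qinn (gm y) = d - n := by
              rw [hgyy]
              apply prv_eq_of Qinn (y - n) (d - n) hdQ (by omega)
              intro z hz hlt
              obtain ⟨y₂, hy₂, rfl⟩ := hQmem z hz
              have hy₂b := hmemIcc y₂ (Or.inr hy₂)
              by_cases h : j < y₂
              · simp only [hgm, if_pos h] at hlt ⊢
                have := hdge y₂ hy₂ (by omega)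
                omega
              · simp only [hgm, if_neg h] at hlt
                omega
            rw [hprv, hgyy]
            omega
          · have hgyy : gm y = y := by simp only [hgm, if_neg hjy]
            have hgd : gm d = d := by simp only [hgm, if_neg (by omega : ¬ j < d)]
            have hdQ : d ∈ Qinn := by
              rw [← hgd]; exact Finset.mem_image_of_mem gm hdI
            have hprv : prv Qinn (gm y) = d := by
              rw [hgyy]
              apply prv_eq_of Qinn y d hdQ (by omega)
              intro z hz hlt
              obtain ⟨y₂, hy₂, rfl⟩ := hQmem z hz
              have hy₂b := hmemIcc y₂ (Or.inr hy₂)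
              by_cases h : j < y₂
              · simp only [hgm, if_pos h] at hlt ⊢
                omega
              · simp only [hgm, if_neg h] at hlt ⊢
                exact hdge y₂ hy₂ hlt
            rw [hprv, hgyy]
            omega
      · -- y is the smallest inner point
        have hymin : ∀ z ∈ Inn, y ≤ z := by
          intro z hz
          by_contra hc
          refine hfy ⟨z, ?_⟩
          simp only [Finset.mem_filter]
          exact ⟨hz, by omega⟩
        have hyj : y ≤ j := hymin j hj
        have hcy : c y = Inn.max' hInn - n := by
          rw [hcInn y hyI, dif_neg hfy]
        set D := Inn.max' hInn with hDdef
        have hDI : D ∈ Inn := Finset.max'_mem _ _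
        have hDmax : ∀ z ∈ Inn, z ≤ D := fun z hz => Finset.le_max' _ _ hz
        have hDb := hmemIcc D (Or.inr hDI)
        have hcxD : c x = D - n + k * n := by rw [hcx, hcy]
        have hDres : (D - n + k * n) % n = D % n := by
          rw [show D - n + k*n = D + n*(k-1) by ring, Int.add_mul_emod_self_left]
        have hDresi : ¬ (D - n + k * n) % n = i % n := by
          rw [hDres]
          intro hc
          exact hOutInn i D hi hDI hc.symm
        have hgyy : gm y = y := by simp only [hgm, if_neg (by omega : ¬ j < y)]
        by_cases hDj : D = j
        · have hDresj : (D - n + k * n) % n = j % n := by rw [hDres, hDj]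
          rw [hcxD, htauinv, if_neg hDresi, if_pos hDresj]
          have hprv : prv Qinn (gm y) = j := by
            rw [hgyy]
            apply prv_eq_max_of Qinn y j hQne _ hjQ hQmax
            intro z hz hlt
            obtain ⟨y₂, hy₂, rfl⟩ := hQmem z hz
            have hy₂b := hmemIcc y₂ (Or.inr hy₂)
            by_cases h : j < y₂
            · have := hDmax y₂ hy₂; omega
            · simp only [hgm, if_neg h] at hlt
              have := hymin y₂ hy₂
              omega
          rw [hprv, hgyy]
          omega
        · have hDresj : ¬ (D - n + k * n) % n = j % n := by
            rw [hDres]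
            intro hc
            exact hDj (hinj2 D j (Or.inr hDI) (Or.inr hj) hc)
          rw [hcxD, htauinv, if_neg hDresi, if_neg hDresj, add_zero]
          have hjD : j < D := by
            have := hDmax j hj; omega
          have hgD : gm D = D - n := by simp only [hgm, if_pos hjD]
          have hDQ : D - n ∈ Qinn := by
            rw [← hgD]; exact Finset.mem_image_of_mem gm hDI
          have hprv : prv Qinn (gm y) = D - n := by
            rw [hgyy]
            apply prv_eq_of Qinn y (D - n) hDQ (by omega)
            intro z hz hlt
            obtain ⟨y₂, hy₂, rfl⟩ := hQmem z hz
            have hy₂b := hmemIcc y₂ (Or.inr hy₂)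
            by_cases h : j < y₂
            · simp only [hgm, if_pos h]
              have := hDmax y₂ hy₂
              omega
            · simp only [hgm, if_neg h] at hlt
              have := hymin y₂ hy₂
              omega
          rw [hprv, hgyy]
          omega

/-- In affine type `Ã_{n−1}` with Coxeter element `c` determined by inner
and outer points (so that `c` is the permutation sending each outer point to the next larger
outer point, cyclically with shift `n`, and each inner point to the next smaller inner
point, cyclically with shift `−n`), for every outer point `i` and inner point `j` the
element `τ_{ij} = (i j)_n · (i j+n)_n` is a translation lying in the interval `[1,c]_T`:
it sends `i + kn ↦ i + (k+1)n` and `j + kn ↦ j + (k−1)n` and fixes all other integers,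
and equals the product of loops `ℓ_i ∘ ℓ_j⁻¹`. -/
theorem translation_in_interval
    (n : ℤ) (hn : 2 ≤ n) (Out Inn : Finset ℤ)
    (hunion : Out ∪ Inn = Finset.Icc (1 : ℤ) n) (hdisj : Disjoint Out Inn)
    (hOut : Out.Nonempty) (hInn : Inn.Nonempty)
    (c : Equiv.Perm ℤ) (hcper : ∀ x : ℤ, c (x + n) = c x + n)
    (hcOut : ∀ x ∈ Out, c x =
      if h : (Out.filter (x < ·)).Nonempty then (Out.filter (x < ·)).min' h
      else Out.min' hOut + n)
    (hcInn : ∀ x ∈ Inn, c x =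
      if h : (Inn.filter (· < x)).Nonempty then (Inn.filter (· < x)).max' h
      else Inn.max' hInn - n)
    (i j : ℤ) (hi : i ∈ Out) (hj : j ∈ Inn)
    (τ : Equiv.Perm ℤ) (hτ : τ = reflN n i j * reflN n i (j + n)) :
    (∀ k : ℤ, τ (i + k * n) = i + (k + 1) * n) ∧
    (∀ k : ℤ, τ (j + k * n) = j + (k - 1) * n) ∧
    (∀ x : ℤ, ¬ x % n = i % n → ¬ x % n = j % n → τ x = x) ∧
    τ = loopP n i * (loopP n j)⁻¹ ∧
    absLe (TSet n) τ c := by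
  have hn0 : (0:ℤ) < n := by omega
  have hij_ne : i ≠ j := by
    intro h
    subst h
    exact (Finset.disjoint_left.1 hdisj hi) hj
  have hiIcc : i ∈ Finset.Icc (1:ℤ) n := by
    rw [← hunion]; exact Finset.mem_union_left _ hi
  have hjIcc : j ∈ Finset.Icc (1:ℤ) n := by
    rw [← hunion]; exact Finset.mem_union_right _ hj
  have hij : ¬ i % n = j % n := fun h => hij_ne (icc_emod_inj hn0 hiIcc hjIcc h)
  have hij2 : ¬ i % n = (j + n) % n := by rw [emod_add_n]; exact hij
  -- explicit formula for τ
  have htau : ∀ x : ℤ, τ x = x + (if x % n = i % n then n else if x % n = j % n then -n else 0) := by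
    intro x
    rw [hτ, Equiv.Perm.mul_apply, reflN_apply n i (j + n) hij2 x]
    by_cases h1 : x % n = i % n
    · have hR : (if x % n = i % n then n else if x % n = j % n then -n else (0:ℤ)) = n :=
        if_pos h1
      rw [hR, if_pos h1]
      have e1 : (x + (j + n - i)) % n = (j + n) % n := emod_shift n x i (j + n) h1
      have e1' : (x + (j + n - i)) % n = j % n := by rw [e1, emod_add_n]
      have e2 : ¬ (x + (j + n - i)) % n = i % n := by
        rw [e1']; exact fun hc => hij hc.symm
      rw [reflN_apply n i j hij, if_neg e2, if_pos e1']
      ring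
    · by_cases h2 : x % n = j % n
      · have hR : (if x % n = i % n then n else if x % n = j % n then -n else (0:ℤ)) = -n := by
          rw [if_neg h1, if_pos h2]
        have h2' : x % n = (j + n) % n := by rw [emod_add_n]; exact h2
        rw [hR, if_neg h1, if_pos h2']
        have e1 : (x + (i - (j + n))) % n = i % n := emod_shift n x (j + n) i h2'
        rw [reflN_apply n i j hij, if_pos e1]
        ring
      · have hR : (if x % n = i % n then n else if x % n = j % n then -n else (0:ℤ)) = 0 := by
          rw [if_neg h1, if_neg h2]
        have h2' : ¬ x % n = (j + n) % n := by rw [emod_add_n]; exact h2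
        rw [hR, add_zero, if_neg h1, if_neg h2', add_zero,
          reflN_apply n i j hij, if_neg h1, if_neg h2, add_zero]
  -- explicit formula for τ⁻¹
  have htauinv : ∀ x : ℤ, τ⁻¹ x = x + (if x % n = i % n then -n else if x % n = j % n then n else 0) := by
    intro x
    have key : τ (x + (if x % n = i % n then -n else if x % n = j % n then n else 0)) = x := by
      by_cases h1 : x % n = i % n
      · rw [if_pos h1]
        have e : (x + -n) % n = i % n := by
          rw [show x + -n = x - n by ring, emod_sub_n]; exact h1
        rw [htau, if_pos e]; ring
      · by_cases h2 : x % n = j % n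
        · rw [if_neg h1, if_pos h2]
          have e : (x + n) % n = j % n := by rw [emod_add_n]; exact h2
          have e2 : ¬ (x + n) % n = i % n := by
            rw [emod_add_n]; exact h1
          rw [htau, if_neg e2, if_pos e]; ring
        · rw [if_neg h1, if_neg h2, add_zero, htau, if_neg h1, if_neg h2, add_zero]
    calc τ⁻¹ x = τ⁻¹ (τ (x + (if x % n = i % n then -n else if x % n = j % n then n else 0))) := by
          rw [key]
    _ = _ := Equiv.symm_apply_apply _ _
  refine ⟨?_, ?_, ?_, ?_, ?_⟩
  · intro k
    have hres : (i + k * n) % n = i % n := by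
      rw [show i + k * n = i + n * k by ring, Int.add_mul_emod_self_left]
    rw [htau, if_pos hres]
    ring
  · intro k
    have hres : (j + k * n) % n = j % n := by
      rw [show j + k * n = j + n * k by ring, Int.add_mul_emod_self_left]
    have hres2 : ¬ (j + k * n) % n = i % n := by
      rw [hres]; exact fun hc => hij hc.symm
    rw [htau, if_neg hres2, if_pos hres]
    ring
  · intro x h1 h2
    rw [htau, if_neg h1, if_neg h2, add_zero]
  · -- τ is the product of the two loops
    apply Equiv.ext
    intro x
    have hloopinv : ((loopP n j)⁻¹ : Equiv.Perm ℤ) x = if x % n = j % n then x - n else x := rfl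
    rw [Equiv.Perm.mul_apply, hloopinv, htau]
    by_cases h1 : x % n = i % n
    · have h2 : ¬ x % n = j % n := fun hc => hij (h1 ▸ hc)
      rw [if_pos h1, if_neg h2]
      show x + n = if x % n = i % n then x + n else x
      rw [if_pos h1]
    · by_cases h2 : x % n = j % n
      · rw [if_neg h1, if_pos h2, if_pos h2]
        show x + -n = if (x - n) % n = i % n then x - n + n else x - n
        have : ¬ (x - n) % n = i % n := by rw [emod_sub_n]; exact h1
        rw [if_neg this]
        ring
      · rw [if_neg h1, if_neg h2, if_neg h2, add_zero]
        show x = if x % n = i % n then x + n else x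
        rw [if_neg h1]
  · -- absLe
    obtain ⟨lw, hlwlen, hlwT, hlwprod⟩ :=
      factorizationTC n hn Out Inn hunion hdisj hOut hInn c hcper hcOut hcInn i j hi hj τ hτ htauinv
    have hltau_prod : ([reflN n i j, reflN n i (j + n)] : List (Equiv.Perm ℤ)).prod = τ := by
      rw [List.prod_cons, List.prod_singleton, ← hτ]
    have hltau_mem : ∀ t ∈ ([reflN n i j, reflN n i (j + n)] : List (Equiv.Perm ℤ)), t ∈ TSet n := by
      intro t ht
      rcases List.mem_cons.1 ht with rfl | ht
      · exact reflN_mem_TSet n i j hij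
      · rw [List.mem_singleton] at ht
        subst ht
        exact reflN_mem_TSet n i (j + n) hij2
    have hAmem : (2:ℕ) ∈ {m | ∃ l : List (Equiv.Perm ℤ), l.length = m ∧ (∀ t ∈ l, t ∈ TSet n) ∧ l.prod = τ} :=
      ⟨[reflN n i j, reflN n i (j + n)], rfl, hltau_mem, hltau_prod⟩
    have hA : absLength (TSet n) τ ≤ 2 := Nat.sInf_le hAmem
    have hBmem : lw.length ∈ {m | ∃ l : List (Equiv.Perm ℤ), l.length = m ∧ (∀ t ∈ l, t ∈ TSet n) ∧ l.prod = τ⁻¹ * c} :=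
      ⟨lw, rfl, hlwT, hlwprod⟩
    have hB : absLength (TSet n) (τ⁻¹ * c) ≤ lw.length := Nat.sInf_le hBmem
    -- the set for c is nonempty
    have hcwit : (([reflN n i j, reflN n i (j + n)] : List (Equiv.Perm ℤ)) ++ lw).prod = c := by
      rw [List.prod_append, hltau_prod, hlwprod, mul_inv_cancel_left]
    have hScne : {m | ∃ l : List (Equiv.Perm ℤ), l.length = m ∧ (∀ t ∈ l, t ∈ TSet n) ∧ l.prod = c}.Nonempty := by
      refine ⟨_, ([reflN n i j, reflN n i (j + n)] : List (Equiv.Perm ℤ)) ++ lw, rfl, ?_, hcwit⟩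
      intro t ht
      rcases List.mem_append.1 ht with h | h
      · exact hltau_mem t h
      · exact hlwT t h
    obtain ⟨lc, hlc_len, hlc_T, hlc_prod⟩ := Nat.sInf_mem hScne
    have hClow : n.toNat ≤ absLength (TSet n) c := by
      have := absLower n hn Out Inn hunion hdisj hOut hInn c hcOut hcInn lc hlc_T hlc_prod
      rw [hlc_len] at this
      exact this
    -- optimal lists for τ and τ⁻¹c
    have hSane : {m | ∃ l : List (Equiv.Perm ℤ), l.length = m ∧ (∀ t ∈ l, t ∈ TSet n) ∧ l.prod = τ}.Nonempty :=
      ⟨2, hAmem⟩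
    have hSbne : {m | ∃ l : List (Equiv.Perm ℤ), l.length = m ∧ (∀ t ∈ l, t ∈ TSet n) ∧ l.prod = τ⁻¹ * c}.Nonempty :=
      ⟨lw.length, hBmem⟩
    obtain ⟨la, hla_len, hla_T, hla_prod⟩ := Nat.sInf_mem hSane
    obtain ⟨lb, hlb_len, hlb_T, hlb_prod⟩ := Nat.sInf_mem hSbne
    have hCub : absLength (TSet n) c ≤ absLength (TSet n) τ + absLength (TSet n) (τ⁻¹ * c) := by
      have hwit : (la ++ lb).prod = c := by
        rw [List.prod_append, hla_prod, hlb_prod, mul_inv_cancel_left]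
      have hmem : (la ++ lb).length ∈ {m | ∃ l : List (Equiv.Perm ℤ), l.length = m ∧ (∀ t ∈ l, t ∈ TSet n) ∧ l.prod = c} := by
        refine ⟨la ++ lb, rfl, ?_, hwit⟩
        intro t ht
        rcases List.mem_append.1 ht with h | h
        · exact hla_T t h
        · exact hlb_T t h
      have := Nat.sInf_le hmem
      rw [List.length_append, hla_len, hlb_len] at this
      exact this
    show absLength (TSet n) τ + absLength (TSet n) (τ⁻¹ * c) = absLength (TSet n) c
    omega
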